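/- Let $\mathbb{F}$ be an algebraically closed field, $H$ and $K$ unital associative algebras, $\mathcal{A}$ a finite-dimensional $H$-simple algebra, and $\mathcal{S}$ a central $K$-simple algebra (i.e., $\mathcal{S}$ is unital with center $\mathbb{F} \cdot 1$, and $K$-simple). Then $\mathcal{A} \otimes_\mathbb{F} \mathcal{S}$ is $H \otimes_\mathbb{F} K$-simple under the action $(h \otimes k)(a \otimes s) = (h \cdot a) \otimes (k \cdot s)$. -/

import Mathlib

section GenAction

variable (F : Type*) {H A : Type*} [Field F] [Ring H] [Algebra F H]
  [NonUnitalRing A] [Module F A] [SMulCommClass F A A] [IsScalarTower F A A]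

/-- `φ : H → End_F(A)` is a generalized `H`-action if it is an algebra homomorphism satisfying
the twisted Leibniz rule: for each `h ∈ H` there are finitely many
`h'ᵢ, h''ᵢ, h'''ᵢ, h''''ᵢ ∈ H` with
`h(ab) = ∑ᵢ h'ᵢ(a) h''ᵢ(b) + h'''ᵢ(b) h''''ᵢ(a)` for all `a b`. -/
def IsGenAction (φ : H →ₐ[F] Module.End F A) : Prop :=
  ∀ h : H, ∃ (k : ℕ) (h₁ h₂ h₃ h₄ : Fin k → H), ∀ a b : A,
    φ h (a * b) =
      (∑ i, φ (h₁ i) a * φ (h₂ i) b) + ∑ i, φ (h₃ i) b * φ (h₄ i) a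

/-- A two-sided ideal `I` of `A` is an `H`-ideal if it is invariant under the action. -/
def IsHIdeal (φ : H →ₐ[F] Module.End F A) (I : TwoSidedIdeal A) : Prop :=
  ∀ (h : H), ∀ a ∈ I, φ h a ∈ I

/-- `A` is `H`-simple if `A² ≠ 0` and the only `H`-invariant two-sided ideals are `0` and `A`. -/
def IsHSimple (φ : H →ₐ[F] Module.End F A) : Prop :=
  (∃ a b : A, a * b ≠ 0) ∧ ∀ I : TwoSidedIdeal A, IsHIdeal F φ I → I = ⊥ ∨ I = ⊤

end GenAction

open scoped TensorProduct

/-!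
As `F` is algebraically closed and `A` is finite-dimensional, Schur's lemma and the Jacobson
density theorem (together: Burnside's theorem) show that the multiplications of `A` and the
action of `H` generate all of `End_F A`. A nonzero `H ⊗ K`-ideal `I` of `A ⊗ S` is stable
under multiplication by `a ⊗ 1` and under the action of `h ⊗ 1`, hence under `θ ⊗ 1` for
every `θ ∈ End_F A`; rank-one `θ` produce a nonzero `s` with `A ⊗ s ⊆ I`. The `s` with
`A ⊗ s ⊆ I` form a `K`-ideal of `S` (for products, multiply `a₀ ⊗ s` by `b₀ ⊗ t` where
`a₀ b₀ ≠ 0`), which is then all of `S`.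
-/

section Burnside

variable {F R M : Type*} [Field F] [IsAlgClosed F] [Ring R] [Algebra F R]
  [AddCommGroup M] [Module R M] [Module F M] [IsScalarTower F R M] [FiniteDimensional F M]
  [IsSimpleModule R M]

theorem IsSimpleModule.exists_eq_algebraMap_of_isAlgClosed (g : Module.End R M) :
    ∃ c : F, g = algebraMap F (Module.End R M) c := by
  have : Nontrivial M := IsSimpleModule.nontrivial R M
  obtain ⟨c, hc⟩ := Module.End.exists_eigenvalue (g.restrictScalars F)
  obtain ⟨v, hv⟩ := hc.exists_hasEigenvector
  refine ⟨c, by_contra fun hne => hv.2 ?_⟩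
  have hinj := (g - algebraMap F _ c).injective_or_eq_zero.resolve_right (sub_ne_zero.mpr hne)
  apply hinj
  rw [map_zero, LinearMap.sub_apply, Module.algebraMap_end_apply, sub_eq_zero]
  exact hv.apply_eq_smul

theorem IsSimpleModule.exists_smul_eq_of_isAlgClosed (θ : Module.End F M) :
    ∃ r : R, ∀ m : M, r • m = θ m := by
  have : Module.Finite (Module.End R M) M := Module.Finite.of_restrictScalars_finite F _ M
  let θ' : Module.End (Module.End R M) M :=
    { θ.toAddMonoidHom with
      map_smul' := fun g m => by
        obtain ⟨c, rfl⟩ := exists_eq_algebraMap_of_isAlgClosed (F := F) g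
        simp }
  obtain ⟨r, hr⟩ := Module.Finite.toModuleEnd_moduleEnd_surjective (R := R) (M := M) θ'
  exact ⟨r, fun m => congr($hr m)⟩

end Burnside

section MultiplicationAlgebra

variable {F H A : Type*} [Field F] [Ring H] [Algebra F H]
  [NonUnitalRing A] [Module F A] [SMulCommClass F A A] [IsScalarTower F A A]

def multiplicationAlgebra (φ : H →ₐ[F] Module.End F A) : Subalgebra F (Module.End F A) :=
  Algebra.adjoin F
    (Set.range (LinearMap.mulLeft F) ∪ Set.range (LinearMap.mulRight F) ∪ Set.range φ)

variable (φ : H →ₐ[F] Module.End F A)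

theorem isSimpleModule_multiplicationAlgebra (hA : IsHSimple F φ) :
    IsSimpleModule (multiplicationAlgebra φ) A := by
  obtain ⟨⟨a, b, hab⟩, hideal⟩ := hA
  have : Nontrivial A := nontrivial_of_ne (a * b) 0 hab
  have mem {θ} (hθ : θ ∈ _) : θ ∈ multiplicationAlgebra φ := Algebra.subset_adjoin hθ
  refine (isSimpleModule_iff ..).2 ⟨fun p => ?_⟩
  let I : TwoSidedIdeal A := .mk' p p.zero_mem p.add_mem p.neg_mem
    (fun {x _} hy => p.smul_mem ⟨_, mem (.inl (.inl ⟨x, rfl⟩))⟩ hy)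
    (fun {_ y} hx => p.smul_mem ⟨_, mem (.inl (.inr ⟨y, rfl⟩))⟩ hx)
  have hI (x : A) : x ∈ I ↔ x ∈ p := TwoSidedIdeal.mem_mk' ..
  rcases hideal I fun h x hx => (hI _).2 (p.smul_mem ⟨_, mem (.inr ⟨h, rfl⟩)⟩ ((hI x).1 hx))
    with h | h
  · exact .inl (eq_bot_iff.2 fun x hx => by simpa [h] using (hI x).2 hx)
  · exact .inr (eq_top_iff.2 fun x _ => by simpa [h] using hI x)

theorem multiplicationAlgebra_eq_top [IsAlgClosed F] [FiniteDimensional F A]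
    (hA : IsHSimple F φ) : multiplicationAlgebra φ = ⊤ := by
  have := isSimpleModule_multiplicationAlgebra φ hA
  refine eq_top_iff.2 fun θ _ => ?_
  obtain ⟨r, hr⟩ :=
    IsSimpleModule.exists_smul_eq_of_isAlgClosed (R := multiplicationAlgebra φ) θ
  exact LinearMap.ext hr ▸ r.2

end MultiplicationAlgebra

section TensorProductOverField

open LinearMap TensorProduct

variable {F A S : Type*} [Field F] [AddCommGroup A] [Module F A] [AddCommGroup S] [Module F S]

theorem TensorProduct.tmul_ne_zero {a : A} {s : S} (ha : a ≠ 0) (hs : s ≠ 0) :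
    a ⊗ₜ[F] s ≠ 0 := by
  obtain ⟨f, hf⟩ := Module.Projective.exists_dual_eq_one F ha
  intro h
  simpa [hf, hs] using congr(TensorProduct.lid F S (rTensor S f $h))

theorem TensorProduct.rTensor_smulRight (f : Module.Dual F A) (a : A) (x : A ⊗[F] S) :
    rTensor S (f.smulRight a) x = a ⊗ₜ TensorProduct.lid F S (rTensor S f x) := by
  induction x using TensorProduct.induction_on with
  | zero => simp
  | tmul b s => simp [smul_tmul]
  | add x y hx hy => simp [hx, hy, tmul_add]

theorem TensorProduct.exists_dual_lid_rTensor_ne_zero {x : A ⊗[F] S} (hx : x ≠ 0) :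
    ∃ f : Module.Dual F A, TensorProduct.lid F S (rTensor S f x) ≠ 0 := by
  let b := Module.Free.chooseBasis F A
  have hcoord (i) (y : A ⊗[F] S) :
      TensorProduct.lid F S (rTensor S (b.coord i) y) = equivFinsuppOfBasisLeft b y i := by
    induction y using TensorProduct.induction_on with
    | zero => simp
    | tmul a s => simp
    | add y z hy hz => simp [hy, hz]
  obtain ⟨i, hi⟩ := Finsupp.ne_iff.1 ((equivFinsuppOfBasisLeft b).map_ne_zero_iff.2 hx)
  exact ⟨b.coord i, hcoord i x ▸ hi⟩

end TensorProductOverField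

section IdealsOfTensorProduct

open LinearMap TensorProduct

variable {F H A S : Type*} [Field F] [Ring H] [Algebra F H]
  [NonUnitalRing A] [Module F A] [SMulCommClass F A A] [IsScalarTower F A A]
  [Ring S] [Algebra F S]

namespace TwoSidedIdeal

variable (I : TwoSidedIdeal (A ⊗[F] S))

theorem rTensor_mem_of_mem_multiplicationAlgebra {φ : H →ₐ[F] Module.End F A}
    (hI : ∀ h, ∀ x ∈ I, rTensor S (φ h) x ∈ I) {θ : Module.End F A}
    (hθ : θ ∈ multiplicationAlgebra φ) : ∀ x ∈ I, rTensor S θ x ∈ I := by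
  induction hθ using Algebra.adjoin_induction with
  | mem θ hθ =>
    rcases hθ with (⟨a, rfl⟩ | ⟨a, rfl⟩) | ⟨h, rfl⟩
    · have : rTensor S (mulLeft F a) = mulLeft F (a ⊗ₜ[F] (1 : S)) :=
        TensorProduct.ext' fun b s => by simp
      exact fun x hx => this ▸ I.mul_mem_left _ _ hx
    · have : rTensor S (mulRight F a) = mulRight F (a ⊗ₜ[F] (1 : S)) :=
        TensorProduct.ext' fun b s => by simp
      exact fun x hx => this ▸ I.mul_mem_right _ _ hx
    · exact hI h
  | algebraMap r => simpa only [← AlgHom.commutes φ] using hI (algebraMap F H r)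
  | add θ₁ θ₂ _ _ h₁ h₂ =>
    intro x hx
    simpa only [rTensor_add, LinearMap.add_apply] using I.add_mem (h₁ x hx) (h₂ x hx)
  | mul θ₁ θ₂ _ _ h₁ h₂ =>
    intro x hx
    simpa only [rTensor_mul, Module.End.mul_apply] using h₁ _ (h₂ x hx)

variable {I}

theorem tmul_mem_of_tmul_mem
    (hI : ∀ θ : Module.End F A, ∀ x ∈ I, rTensor S θ x ∈ I)
    {c : A} (hc : c ≠ 0) {s : S} (hcs : c ⊗ₜ s ∈ I) (a : A) : a ⊗ₜ s ∈ I := by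
  obtain ⟨f, hf⟩ := Module.Projective.exists_dual_eq_one F hc
  simpa [hf] using hI (f.smulRight a) _ hcs

theorem exists_ne_zero_forall_tmul_mem
    (hI : ∀ θ : Module.End F A, ∀ x ∈ I, rTensor S θ x ∈ I)
    {x : A ⊗[F] S} (hxI : x ∈ I) (hx : x ≠ 0) :
    ∃ s ≠ 0, ∀ a : A, a ⊗ₜ s ∈ I := by
  obtain ⟨f, hf⟩ := exists_dual_lid_rTensor_ne_zero hx
  exact ⟨_, hf, fun a => rTensor_smulRight f a x ▸ hI _ x hxI⟩

theorem exists_mem_iff_forall_tmul_mem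
    (hI : ∀ θ : Module.End F A, ∀ x ∈ I, rTensor S θ x ∈ I)
    (hA : ∃ a b : A, a * b ≠ 0) :
    ∃ J : TwoSidedIdeal S, ∀ s, s ∈ J ↔ ∀ a : A, a ⊗ₜ s ∈ I := by
  obtain ⟨a₀, b₀, hab⟩ := hA
  refine ⟨.mk' {s | ∀ a : A, a ⊗ₜ s ∈ I} (fun a => by simp)
    (fun hs ht a => by simpa [tmul_add] using I.add_mem (hs a) (ht a))
    (fun hs a => by simpa [tmul_neg] using I.neg_mem (hs a))
    (fun {s t} ht => tmul_mem_of_tmul_mem hI hab (by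
      simpa using I.mul_mem_left (a₀ ⊗ₜ s) _ (ht b₀)))
    (fun {s t} hs => tmul_mem_of_tmul_mem hI hab (by
      simpa using I.mul_mem_right _ (b₀ ⊗ₜ t) (hs a₀))),
    fun s => TwoSidedIdeal.mem_mk' ..⟩

end TwoSidedIdeal

theorem TwoSidedIdeal.eq_top_of_forall_tmul_mem {I : TwoSidedIdeal (A ⊗[F] S)}
    (hI : ∀ (a : A) (s : S), a ⊗ₜ s ∈ I) : I = ⊤ := by
  rw [eq_top_iff]
  rintro x -
  induction x using TensorProduct.induction_on with
  | zero => exact I.zero_mem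
  | tmul a s => exact hI a s
  | add x y hx hy => exact I.add_mem hx hy

end IdealsOfTensorProduct

theorem tensor_HK_simple_general
    (F : Type*) [Field F] [IsAlgClosed F] (H K A S : Type*)
    [Ring H] [Algebra F H] [Ring K] [Algebra F K]
    [NonUnitalRing A] [Module F A] [SMulCommClass F A A] [IsScalarTower F A A]
    [FiniteDimensional F A]
    [Ring S] [Algebra F S]
    (φA : H →ₐ[F] Module.End F A) (hAsimple : IsHSimple F φA)
    (φS : K →ₐ[F] Module.End F S) (hSsimple : IsHSimple F φS)
    (φ : H ⊗[F] K →ₐ[F] Module.End F (A ⊗[F] S))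
    (hpure : ∀ (h : H) (k : K) (a : A) (s : S),
      φ (h ⊗ₜ k) (a ⊗ₜ s) = (φA h a) ⊗ₜ (φS k s)) :
    IsHSimple F φ := by
  obtain ⟨a₀, b₀, hab⟩ := hAsimple.1
  have : Nontrivial S := let ⟨s, t, hst⟩ := hSsimple.1; nontrivial_of_ne (s * t) 0 hst
  refine ⟨⟨a₀ ⊗ₜ 1, b₀ ⊗ₜ 1, ?_⟩, fun I hI => ?_⟩
  · simpa using TensorProduct.tmul_ne_zero hab one_ne_zero
  have hrTensor (θ : Module.End F A) : ∀ x ∈ I, LinearMap.rTensor S θ x ∈ I := by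
    refine I.rTensor_mem_of_mem_multiplicationAlgebra (fun h x hx => ?_)
      (multiplicationAlgebra_eq_top φA hAsimple ▸ Algebra.mem_top)
    have : LinearMap.rTensor S (φA h) = φ (h ⊗ₜ 1) :=
      TensorProduct.ext' fun a s => by simp [hpure]
    exact this ▸ hI _ x hx
  obtain ⟨J, hJ⟩ := I.exists_mem_iff_forall_tmul_mem hrTensor ⟨a₀, b₀, hab⟩
  have hJK : IsHIdeal F φS J := fun k s hs => (hJ _).2 fun a => by
    simpa [hpure] using hI (1 ⊗ₜ k) _ ((hJ s).1 hs a)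
  rcases eq_or_ne I ⊥ with hbot | hbot
  · exact .inl hbot
  obtain ⟨x, hxI, hx⟩ : ∃ x ∈ I, x ≠ 0 := by
    contrapose! hbot
    exact eq_bot_iff.2 fun x hx => (TwoSidedIdeal.mem_bot _).2 (hbot x hx)
  obtain ⟨s, hs, hsI⟩ := I.exists_ne_zero_forall_tmul_mem hrTensor hxI hx
  refine .inr (TwoSidedIdeal.eq_top_of_forall_tmul_mem fun a t => (hJ t).1 ?_ a)
  rcases hSsimple.2 J hJK with hJbot | hJtop
  · exact absurd ((hJ s).2 hsI) (by simpa [hJbot] using hs)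
  · exact hJtop ▸ TwoSidedIdeal.mem_top S

/-- Let `F` be an algebraically closed field, `H` and `K` unital associative algebras, `A` a
finite-dimensional `H`-simple algebra, and `S` a central `K`-simple algebra (i.e. `S` is unital
with center `F·1`, and `K`-simple). Then `A ⊗_F S` is `H ⊗_F K`-simple under the action
`(h ⊗ k)(a ⊗ s) = (h⬝a) ⊗ (k⬝s)`. -/
theorem tensor_HK_simple
    (F : Type*) [Field F] [IsAlgClosed F] (H K A S : Type*)
    [Ring H] [Algebra F H] [Ring K] [Algebra F K]
    [NonUnitalRing A] [Module F A] [SMulCommClass F A A] [IsScalarTower F A A]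
    [FiniteDimensional F A]
    [Ring S] [Algebra F S]
    (φA : H →ₐ[F] Module.End F A) (hφA : IsGenAction F φA) (hAsimple : IsHSimple F φA)
    (φS : K →ₐ[F] Module.End F S) (hφS : IsGenAction F φS) (hSsimple : IsHSimple F φS)
    (hcentral : Subalgebra.center F S = ⊥)
    (φ : H ⊗[F] K →ₐ[F] Module.End F (A ⊗[F] S)) (hφ : IsGenAction F φ)
    (hpure : ∀ (h : H) (k : K) (a : A) (s : S),
      φ (h ⊗ₜ k) (a ⊗ₜ s) = (φA h a) ⊗ₜ (φS k s)) :
    IsHSimple F φ :=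
  tensor_HK_simple_general F H K A S φA hAsimple φS hSsimple φ hpure
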